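/- Let α₁, …, α₅ ∈ ℂ and let (x, y, z) be a solution of the modified reduced three-wave interaction system (2) with parameters (α₁, α₂, α₃, α₄, α₅) on a connected open set U ⊆ ℂ such that y(t) ≠ α₅ for all t ∈ U. Define s·x = x − √−1(α₂−α₄)/(2(y−α₅)), s·y = y, and s·z = [4y²z − 8α₅yz + 4√−1(α₂−α₄)xy − 4√−1(α₂−α₄)α₅x − 2(α₁−α₃)(α₂−α₄)y + 4α₅²z + (α₂−α₄)(α₂−α₄+2(α₁−α₃)α₅)] / (4(y−α₅)²). Then (s·x, s·y, s·z) is a solution on U of system (2) with parameters (α₁, α₄, α₃, α₂, α₅). -/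

import Mathlib

open Complex

noncomputable section

/-- A solution of the modified reduced three-wave interaction dynamical system (2)
on a set `U ⊆ ℂ`, with parameters `α₁, …, α₅ : ℂ`. -/
def solMTWI (α₁ α₂ α₃ α₄ α₅ : ℂ) (x y z : ℂ → ℂ) (U : Set ℂ) : Prop :=
  ∀ t ∈ U,
    HasDerivAt x
      (-2 * (y t) ^ 2 - (α₁ + α₃ - 2 * α₅) * y t + z t
        + (α₂ + α₄ + 2 * (α₁ + α₃) * α₅) / 2) t ∧
    HasDerivAt y
      (2 * x t * y t - 2 * α₅ * x t + I * (α₁ - α₃) * y t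
        - I * (α₂ - α₄ + 2 * (α₁ - α₃) * α₅) / 2) t ∧
    HasDerivAt z
      (-2 * x t * z t - (α₂ + α₄) * x t + I * (α₂ - α₄) * y t
        - I * (α₁ - α₃) * z t + I * (α₂ * α₃ - α₁ * α₄)) t

/-!
Write `w = y - α₅`, `δ = α₁ - α₃` and `c = √-1 (α₂ - α₄) / 2`. The second equation of (2) reads
`w' = (2x + √-1 δ) w - c`, and `s` is the gauge transformation
`s·x = x - c / w`, `s·z = z + (2x + √-1 δ) c / w - c² / w²`.
Exchanging `α₂` and `α₄` turns `c` into `-c`, which the shift of `x` compensates exactly in the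
second equation. With `s·z` in this gauge form, the other two equations become identities of
rational functions in `x, y, z` with denominators powers of `w`, in which `√-1` may be treated
as an indeterminate.
-/

def backlundX (α₂ α₄ α₅ : ℂ) (x y : ℂ → ℂ) : ℂ → ℂ :=
  fun t => x t - I * (α₂ - α₄) / (2 * (y t - α₅))

def backlundZ (α₁ α₂ α₃ α₄ α₅ : ℂ) (x y z : ℂ → ℂ) : ℂ → ℂ :=
  fun t =>
    (4 * (y t) ^ 2 * z t - 8 * α₅ * y t * z t + 4 * I * (α₂ - α₄) * x t * y t
      - 4 * I * (α₂ - α₄) * α₅ * x t - 2 * (α₁ - α₃) * (α₂ - α₄) * y t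
      + 4 * α₅ ^ 2 * z t
      + (α₂ - α₄) * (α₂ - α₄ + 2 * (α₁ - α₃) * α₅)) / (4 * (y t - α₅) ^ 2)

variable {α₁ α₂ α₃ α₄ α₅ : ℂ} {x y z : ℂ → ℂ} {U : Set ℂ} {t : ℂ}

theorem backlundZ_eq_gauge (hyt : y t ≠ α₅) :
    backlundZ α₁ α₂ α₃ α₄ α₅ x y z t =
      z t + (2 * x t + I * (α₁ - α₃)) * (I * (α₂ - α₄) / 2) / (y t - α₅)
        - (I * (α₂ - α₄) / 2) ^ 2 / (y t - α₅) ^ 2 := by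
  have hw : y t - α₅ ≠ 0 := sub_ne_zero.mpr hyt
  unfold backlundZ
  field_simp
  ring_nf
  simp only [I_sq]
  ring

namespace solMTWI

theorem hasDerivAt_backlundX (h : solMTWI α₁ α₂ α₃ α₄ α₅ x y z U) (ht : t ∈ U)
    (hyt : y t ≠ α₅) :
    HasDerivAt (backlundX α₂ α₄ α₅ x y)
      (-2 * (y t) ^ 2 - (α₁ + α₃ - 2 * α₅) * y t + backlundZ α₁ α₂ α₃ α₄ α₅ x y z t
        + (α₄ + α₂ + 2 * (α₁ + α₃) * α₅) / 2) t := by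
  obtain ⟨hx, hy, -⟩ := h t ht
  have hw : y t - α₅ ≠ 0 := sub_ne_zero.mpr hyt
  refine (hx.sub ((hasDerivAt_const t _).div ((hy.sub_const α₅).const_mul 2)
    (mul_ne_zero two_ne_zero hw))).congr_deriv ?_
  rw [backlundZ_eq_gauge hyt]
  generalize x t = X, y t = Y, z t = Z at *
  field_simp
  ring

theorem hasDerivAt_y_backlund (h : solMTWI α₁ α₂ α₃ α₄ α₅ x y z U) (ht : t ∈ U)
    (hyt : y t ≠ α₅) :
    HasDerivAt y
      (2 * backlundX α₂ α₄ α₅ x y t * y t - 2 * α₅ * backlundX α₂ α₄ α₅ x y t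
        + I * (α₁ - α₃) * y t - I * (α₄ - α₂ + 2 * (α₁ - α₃) * α₅) / 2) t := by
  refine (h t ht).2.1.congr_deriv ?_
  have hw : y t - α₅ ≠ 0 := sub_ne_zero.mpr hyt
  unfold backlundX
  generalize x t = X, y t = Y at *
  field_simp
  ring

theorem hasDerivAt_backlundZ (h : solMTWI α₁ α₂ α₃ α₄ α₅ x y z U) (ht : t ∈ U)
    (hyt : y t ≠ α₅) :
    HasDerivAt (backlundZ α₁ α₂ α₃ α₄ α₅ x y z)
      (-2 * backlundX α₂ α₄ α₅ x y t * backlundZ α₁ α₂ α₃ α₄ α₅ x y z t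
        - (α₄ + α₂) * backlundX α₂ α₄ α₅ x y t + I * (α₄ - α₂) * y t
        - I * (α₁ - α₃) * backlundZ α₁ α₂ α₃ α₄ α₅ x y z t + I * (α₄ * α₃ - α₁ * α₂)) t := by
  obtain ⟨hx, hy, hz⟩ := h t ht
  have hw : y t - α₅ ≠ 0 := sub_ne_zero.mpr hyt
  have hw' := hy.sub_const α₅
  have hgauge := (hz.add ((((hx.const_mul 2).add_const (I * (α₁ - α₃))).mul_const
      (I * (α₂ - α₄) / 2)).div hw' hw)).sub
    ((hasDerivAt_const t ((I * (α₂ - α₄) / 2) ^ 2)).div (hw'.pow 2) (pow_ne_zero 2 hw))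
  have heq : backlundZ α₁ α₂ α₃ α₄ α₅ x y z =ᶠ[nhds t] _ :=
    (hy.continuousAt.eventually_ne hyt).mono fun s hs => backlundZ_eq_gauge hs
  refine (hgauge.congr_of_eventuallyEq heq).congr_deriv ?_
  rw [backlundZ_eq_gauge hyt]
  unfold backlundX
  simp only [Pi.pow_apply]
  generalize x t = X, y t = Y, z t = Z at *
  field_simp
  ring

end solMTWI

theorem stmt9_general (α₁ α₂ α₃ α₄ α₅ : ℂ) (U : Set ℂ)
    (x y z : ℂ → ℂ) (hsol : solMTWI α₁ α₂ α₃ α₄ α₅ x y z U)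
    (hy : ∀ t ∈ U, y t ≠ α₅) :
    solMTWI α₁ α₄ α₃ α₂ α₅
      (fun t => x t - I * (α₂ - α₄) / (2 * (y t - α₅)))
      y
      (fun t =>
        (4 * (y t) ^ 2 * z t - 8 * α₅ * y t * z t + 4 * I * (α₂ - α₄) * x t * y t
          - 4 * I * (α₂ - α₄) * α₅ * x t - 2 * (α₁ - α₃) * (α₂ - α₄) * y t
          + 4 * α₅ ^ 2 * z t
          + (α₂ - α₄) * (α₂ - α₄ + 2 * (α₁ - α₃) * α₅)) / (4 * (y t - α₅) ^ 2))
      U := fun t ht =>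
  ⟨hsol.hasDerivAt_backlundX ht (hy t ht), hsol.hasDerivAt_y_backlund ht (hy t ht),
    hsol.hasDerivAt_backlundZ ht (hy t ht)⟩

theorem stmt9 (α₁ α₂ α₃ α₄ α₅ : ℂ) (U : Set ℂ) (hU : IsOpen U) (hUc : IsConnected U)
    (x y z : ℂ → ℂ) (hsol : solMTWI α₁ α₂ α₃ α₄ α₅ x y z U)
    (hy : ∀ t ∈ U, y t ≠ α₅) :
    solMTWI α₁ α₄ α₃ α₂ α₅
      (fun t => x t - I * (α₂ - α₄) / (2 * (y t - α₅)))
      y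
      (fun t =>
        (4 * (y t) ^ 2 * z t - 8 * α₅ * y t * z t + 4 * I * (α₂ - α₄) * x t * y t
          - 4 * I * (α₂ - α₄) * α₅ * x t - 2 * (α₁ - α₃) * (α₂ - α₄) * y t
          + 4 * α₅ ^ 2 * z t
          + (α₂ - α₄) * (α₂ - α₄ + 2 * (α₁ - α₃) * α₅)) / (4 * (y t - α₅) ^ 2))
      U :=
  stmt9_general α₁ α₂ α₃ α₄ α₅ U x y z hsol hy
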